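/- Let p_1,…,p_n > 0 with Σ_i p_i = 1, and suppose f attains its minimum value f* and satisfies the strong convexity inequality f(y) ≥ f(x) + ⟨∇f(x), y − x⟩ + (μ/2) Σ_i (L_i/p_i)‖y_i − x_i‖² for all x, y ∈ E, with μ > 0. Let x ∈ E, let δ = (δ_1,…,δ_n) with δ_i ≥ 0, and let T = (T_1,…,T_n) ∈ E satisfy, for each i, ⟨∇_i f(x), T_i⟩ + (L_i/2)‖T_i‖² ≤ min{ 0, δ_i + inf_{s ∈ E_i}(⟨∇_i f(x), s⟩ + (L_i/2)‖s‖²) }. Then Σ_{i=1}^n p_i · f(x + U_i T_i) − f* ≤ (1 − μ)(f(x) − f*) + Σ_{i=1}^n p_i δ_i. -/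

import Mathlib

open scoped RealInnerProductSpace
open MeasureTheory

noncomputable section

variable {n : ℕ} {E : Fin n → Type*} [∀ i, NormedAddCommGroup (E i)]
  [∀ i, InnerProductSpace ℝ (E i)] [∀ i, FiniteDimensional ℝ (E i)]

/-- `U i t`: embedding of the `i`-th block into the product space. -/
def blockEmbed (i : Fin n) (t : E i) : PiLp 2 E :=
  (WithLp.equiv 2 (∀ j, E j)).symm (Pi.single i t)

/-- `V_i(x,t)` in the smooth case (`Ψ ≡ 0`). -/
def ViSmooth (f : PiLp 2 E → ℝ) (L : Fin n → ℝ)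
    (x : PiLp 2 E) (i : Fin n) (t : E i) : ℝ :=
  ⟪(gradient f x) i, t⟫ + L i / 2 * ‖t‖ ^ 2

/-! The block Lipschitz condition gives the block descent lemma `f (x + U_i t) ≤ f x + V_i(x, t)`,
and the hypothesis on `T` gives `V_i(x, T_i) ≤ δ_i + V_i(x, s)` for every test point `s`.
Testing with `s_i = (μ / p_i) (x⋆_i - x_i)`, the `p`-average of `V_i(x, s_i)` is
`μ ⟪∇f x, x⋆ - x⟫ + μ² / 2 ‖x⋆ - x‖²` in the weighted norm, i.e. `μ` times the strong convexity lower model at `x⋆`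
minus `μ f x`, hence at most `μ (f⋆ - f x)`. -/

open Set

lemma le_add_deriv_add_of_deriv_sub_le {φ φ' : ℝ → ℝ} {K : ℝ}
    (hφ : ∀ τ, HasDerivAt φ (φ' τ) τ) (hK : ∀ τ ∈ Ioo (0 : ℝ) 1, φ' τ - φ' 0 ≤ K * τ) :
    φ 1 ≤ φ 0 + φ' 0 + K / 2 := by
  set gap : ℝ → ℝ := fun τ => φ 0 + τ * φ' 0 + K / 2 * τ ^ 2 - φ τ
  have hgap : ∀ τ, HasDerivAt gap (φ' 0 + K * τ - φ' τ) τ := fun τ => by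
    have := ((((hasDerivAt_id τ).mul_const (φ' 0)).const_add (φ 0)).add
      (((hasDerivAt_id τ).pow 2).const_mul (K / 2))).sub (hφ τ)
    exact this.congr_deriv (by simp only [id, one_mul, mul_one, Nat.cast_ofNat]; ring)
  have hmono : MonotoneOn gap (Icc 0 1) :=
    monotoneOn_of_deriv_nonneg (convex_Icc 0 1)
      (fun τ _ => (hgap τ).continuousAt.continuousWithinAt)
      (fun τ _ => (hgap τ).differentiableAt.differentiableWithinAt)
      (fun τ hτ => by
        rw [interior_Icc] at hτ
        rw [(hgap τ).deriv]
        linarith [hK τ hτ])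
  have hgap01 := hmono (left_mem_Icc.2 zero_le_one) (right_mem_Icc.2 zero_le_one) zero_le_one
  simp only [gap] at hgap01
  linarith

lemma hasDerivAt_comp_add_smul {F : Type*} [NormedAddCommGroup F] [InnerProductSpace ℝ F]
    [CompleteSpace F] {f : F → ℝ} (hf : Differentiable ℝ f) (x v : F) (τ : ℝ) :
    HasDerivAt (fun s : ℝ => f (x + s • v)) ⟪gradient f (x + τ • v), v⟫ τ := by
  have hline : HasDerivAt (fun s : ℝ => x + s • v) v τ := by
    simpa using ((hasDerivAt_id τ).smul_const v).const_add x
  exact (hasGradientAt_iff_hasFDerivAt.1 (hf _).hasGradientAt).comp_hasDerivAt τ hline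

lemma bddBelow_range_inner_add_sq_norm {F : Type*} [NormedAddCommGroup F]
    [InnerProductSpace ℝ F] (g : F) {L : ℝ} (hL : 0 < L) :
    BddBelow (range fun t : F => ⟪g, t⟫ + L / 2 * ‖t‖ ^ 2) := by
  refine ⟨-(‖g‖ ^ 2 / (2 * L)), ?_⟩
  rintro _ ⟨t, rfl⟩
  have hcs : -(‖g‖ * ‖t‖) ≤ ⟪g, t⟫ := (abs_le.1 (abs_real_inner_le_norm g t)).1
  have hsq : 0 ≤ (L * ‖t‖ - ‖g‖) ^ 2 / (2 * L) := by positivity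
  have hexpand : (L * ‖t‖ - ‖g‖) ^ 2 / (2 * L) = L / 2 * ‖t‖ ^ 2 - ‖g‖ * ‖t‖ + ‖g‖ ^ 2 / (2 * L) := by
    field_simp; ring
  simp only
  linarith

section

omit [∀ i, FiniteDimensional ℝ (E i)]

lemma inner_blockEmbed (g : PiLp 2 E) (i : Fin n) (t : E i) :
    ⟪g, blockEmbed i t⟫ = ⟪g i, t⟫ := by
  simp only [blockEmbed, PiLp.inner_apply]
  rw [Finset.sum_eq_single i]
  · simp
  · intro j _ hj; simp [Pi.single_eq_of_ne hj]
  · simp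

lemma blockEmbed_smul (i : Fin n) (τ : ℝ) (t : E i) :
    blockEmbed i (τ • t) = τ • blockEmbed (E := E) i t := by
  simp [blockEmbed, Pi.single_smul]

end

lemma apply_add_blockEmbed_le_add_viSmooth (L : Fin n → ℝ) {f : PiLp 2 E → ℝ}
    (hf : Differentiable ℝ f)
    (hLip : ∀ (x : PiLp 2 E) (i : Fin n) (t : E i),
      ‖(gradient f (x + blockEmbed i t)) i - (gradient f x) i‖ ≤ L i * ‖t‖)
    (x : PiLp 2 E) (i : Fin n) (t : E i) :
    f (x + blockEmbed i t) ≤ f x + ViSmooth f L x i t := by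
  have hφ := hasDerivAt_comp_add_smul hf x (blockEmbed i t)
  have hgrowth : ∀ τ ∈ Ioo (0 : ℝ) 1,
      ⟪gradient f (x + τ • blockEmbed i t), blockEmbed i t⟫ -
        ⟪gradient f (x + (0 : ℝ) • blockEmbed i t), blockEmbed i t⟫ ≤ L i * ‖t‖ ^ 2 * τ := by
    intro τ hτ
    have hLipτ := hLip x i (τ • t)
    rw [blockEmbed_smul, norm_smul, Real.norm_eq_abs, abs_of_pos hτ.1] at hLipτ
    calc _ = ⟪(gradient f (x + τ • blockEmbed i t)) i - (gradient f x) i, t⟫ := by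
          simp only [inner_blockEmbed, zero_smul, add_zero, inner_sub_left]
      _ ≤ ‖(gradient f (x + τ • blockEmbed i t)) i - (gradient f x) i‖ * ‖t‖ :=
          real_inner_le_norm _ _
      _ ≤ L i * (τ * ‖t‖) * ‖t‖ := by gcongr
      _ = L i * ‖t‖ ^ 2 * τ := by ring
  have hquad := le_add_deriv_add_of_deriv_sub_le hφ hgrowth
  simp only [one_smul, zero_smul, add_zero, inner_blockEmbed] at hquad
  rw [ViSmooth]
  linarith

lemma viSmooth_le_add_viSmooth {L : Fin n → ℝ} {i : Fin n} (hL : 0 < L i) {f : PiLp 2 E → ℝ}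
    {x : PiLp 2 E} {δ : ℝ} {t : E i} (ht : ViSmooth f L x i t ≤ δ + ⨅ s, ViSmooth f L x i s)
    (s : E i) : ViSmooth f L x i t ≤ δ + ViSmooth f L x i s :=
  ht.trans (add_le_add_right (ciInf_le (bddBelow_range_inner_add_sq_norm _ hL) s) δ)

lemma sum_mul_viSmooth_smul_sub (f : PiLp 2 E → ℝ) (L p : Fin n → ℝ) (hp : ∀ i, p i ≠ 0)
    (μ : ℝ) (x y : PiLp 2 E) :
    ∑ i, p i * ViSmooth f L x i ((μ / p i) • (y i - x i)) =
      μ * ⟪gradient f x, y - x⟫ + μ ^ 2 / 2 * ∑ i, L i / p i * ‖y i - x i‖ ^ 2 := by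
  rw [PiLp.inner_apply, Finset.mul_sum, Finset.mul_sum, ← Finset.sum_add_distrib]
  refine Finset.sum_congr rfl fun i _ => ?_
  have hpi := hp i
  simp only [ViSmooth, PiLp.sub_apply, real_inner_smul_right, norm_smul, Real.norm_eq_abs,
    mul_pow, sq_abs]
  field_simp

theorem smooth_strongly_convex_decrease_general
    (L : Fin n → ℝ) (hL : ∀ i, 0 < L i)
    (f : PiLp 2 E → ℝ) (hfdiff : Differentiable ℝ f)
    (hLip : ∀ (x : PiLp 2 E) (i : Fin n) (t : E i),
      ‖(gradient f (x + blockEmbed i t)) i - (gradient f x) i‖ ≤ L i * ‖t‖)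
    (p : Fin n → ℝ) (hp : ∀ i, 0 < p i) (hpsum : ∑ i, p i = 1)
    (fstar : ℝ) (xstar : PiLp 2 E) (hstar : f xstar = fstar)
    (μ : ℝ) (hμ : 0 < μ)
    (hsc : ∀ x y : PiLp 2 E,
      f x + ⟪gradient f x, y - x⟫ + μ / 2 * ∑ i, L i / p i * ‖y i - x i‖ ^ 2 ≤ f y)
    (x : PiLp 2 E) (δ : Fin n → ℝ)
    (T : PiLp 2 E)
    (hT : ∀ i, ViSmooth f L x i (T i) ≤ min 0 (δ i + ⨅ s : E i, ViSmooth f L x i s)) :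
    ∑ i, p i * f (x + blockEmbed i (T i)) - fstar ≤
      (1 - μ) * (f x - fstar) + ∑ i, p i * δ i := by
  set s : ∀ i, E i := fun i => (μ / p i) • (xstar i - x i)
  have hstep : ∀ i, f (x + blockEmbed i (T i)) ≤ f x + δ i + ViSmooth f L x i (s i) := fun i =>
    (apply_add_blockEmbed_le_add_viSmooth L hfdiff hLip x i (T i)).trans <| by
      linarith [viSmooth_le_add_viSmooth (hL i) ((hT i).trans (min_le_right _ _)) (s i)]
  have hmodel := sum_mul_viSmooth_smul_sub f L p (fun i => (hp i).ne') μ x xstar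
  have hexpected : ∑ i, p i * f (x + blockEmbed i (T i)) ≤
      f x + ∑ i, p i * δ i + ∑ i, p i * ViSmooth f L x i (s i) :=
    calc _ ≤ ∑ i, p i * (f x + δ i + ViSmooth f L x i (s i)) :=
          Finset.sum_le_sum fun i _ => mul_le_mul_of_nonneg_left (hstep i) (hp i).le
      _ = _ := by
          simp only [mul_add, Finset.sum_add_distrib, ← Finset.sum_mul, hpsum, one_mul]
  have hscaled := mul_le_mul_of_nonneg_left (hsc x xstar) hμ.le
  rw [hstar] at hscaled
  linarith

/-- Smooth strongly convex case: one-step expected linear decrease,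
`Σ_i p_i f(x + U_i T_i) − f* ≤ (1 − μ)(f(x) − f*) + Σ_i p_i δ_i`. -/
theorem smooth_strongly_convex_decrease
    (hn : 0 < n)
    (L : Fin n → ℝ) (hL : ∀ i, 0 < L i)
    (f : PiLp 2 E → ℝ) (hfdiff : Differentiable ℝ f) (hfconv : ConvexOn ℝ Set.univ f)
    (hLip : ∀ (x : PiLp 2 E) (i : Fin n) (t : E i),
      ‖(gradient f (x + blockEmbed i t)) i - (gradient f x) i‖ ≤ L i * ‖t‖)
    (p : Fin n → ℝ) (hp : ∀ i, 0 < p i) (hpsum : ∑ i, p i = 1)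
    (fstar : ℝ) (xstar : PiLp 2 E) (hstar : f xstar = fstar) (hmin : ∀ y, fstar ≤ f y)
    (μ : ℝ) (hμ : 0 < μ)
    (hsc : ∀ x y : PiLp 2 E,
      f x + ⟪gradient f x, y - x⟫ + μ / 2 * ∑ i, L i / p i * ‖y i - x i‖ ^ 2 ≤ f y)
    (x : PiLp 2 E) (δ : Fin n → ℝ) (hδ : ∀ i, 0 ≤ δ i)
    (T : PiLp 2 E)
    (hT : ∀ i, ViSmooth f L x i (T i) ≤ min 0 (δ i + ⨅ s : E i, ViSmooth f L x i s)) :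
    ∑ i, p i * f (x + blockEmbed i (T i)) - fstar ≤
      (1 - μ) * (f x - fstar) + ∑ i, p i * δ i :=
  smooth_strongly_convex_decrease_general L hL f hfdiff hLip p hp hpsum fstar xstar hstar μ hμ hsc x
    δ T hT
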